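/- arXiv:1401.7251 — 3 statements merged into one kernel-verified Lean document; each statement's English description precedes it below -/
import Mathlib

section
/- Let α, β, γ, Λ be C² functions of η with α, β, γ never zero, and suppose they satisfy the three off-diagonal plane-wave equations α''/α = -2(Λ')² + (α'/α)(β'/β + γ'/γ), β''/β = -2(Λ')² + (β'/β)(α'/α + γ'/γ), γ''/γ = -2(Λ')² + (γ'/γ)(α'/α + β'/β). Then each of the quantities (ln(α/β))'·(αβ/γ), (ln(γ/α))'·(αγ/β), and (ln(β/γ))'·(βγ/α) is constant. -/
/-!
Multiplying the equations for `a''/a` and `b''/b` by `ab` and subtracting, the `Λ'` terms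
and the products `a'b'` cancel, leaving `W' = W c'/c` for the Wronskian
`W = a'b - ab'`. Hence `W/c` is constant, and `W/c` is exactly `(ln(a/b))'·(ab/c)`.
The three first integrals are this statement for the three cyclic orderings of `α, β, γ`.
-/

open Real

def OffDiagonalEq (a b c Λ : ℝ → ℝ) : Prop :=
  ∀ η, deriv (deriv a) η / a η =
    -2 * (deriv Λ η) ^ 2 + (deriv a η / a η) * (deriv b η / b η + deriv c η / c η)

section

variable {a b c Λ W : ℝ → ℝ}

theorem OffDiagonalEq.swap (h : OffDiagonalEq a b c Λ) : OffDiagonalEq a c b Λ :=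
  fun η => by rw [h η, add_comm (deriv c η / c η)]

theorem OffDiagonalEq.wronskian_deriv (ea : OffDiagonalEq a b c Λ) (eb : OffDiagonalEq b a c Λ)
    (ha0 : ∀ η, a η ≠ 0) (hb0 : ∀ η, b η ≠ 0) (hc0 : ∀ η, c η ≠ 0) (η : ℝ) :
    (deriv (deriv a) η * b η - a η * deriv (deriv b) η) * c η =
      (deriv a η * b η - a η * deriv b η) * deriv c η := by
  have ha := ea η
  have hb := eb η
  field_simp [ha0 η, hb0 η, hc0 η] at ha hb
  linear_combination ha - hb

theorem hasDerivAt_wronskian {x : ℝ} (ha : DifferentiableAt ℝ a x) (hb : DifferentiableAt ℝ b x)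
    (ha' : DifferentiableAt ℝ (deriv a) x) (hb' : DifferentiableAt ℝ (deriv b) x) :
    HasDerivAt (fun t => deriv a t * b t - a t * deriv b t)
      (deriv (deriv a) x * b x - a x * deriv (deriv b) x) x :=
  ((ha'.hasDerivAt.mul hb.hasDerivAt).sub (ha.hasDerivAt.mul hb'.hasDerivAt)).congr_deriv (by ring)

theorem div_eq_div_of_deriv_mul_eq (hW : Differentiable ℝ W) (hc : Differentiable ℝ c)
    (hc0 : ∀ x, c x ≠ 0) (h : ∀ x, deriv W x * c x = W x * deriv c x) (x y : ℝ) :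
    W x / c x = W y / c y := by
  have hquot : ∀ x, HasDerivAt (fun t => W t / c t) 0 x := fun x => by
    simpa only [h x, sub_self, zero_div] using (hW x).hasDerivAt.fun_div (hc x).hasDerivAt (hc0 x)
  exact is_const_of_deriv_eq_zero (fun x => (hquot x).differentiableAt)
    (fun x => (hquot x).deriv) x y

theorem deriv_log_div {x : ℝ} (ha : DifferentiableAt ℝ a x) (hb : DifferentiableAt ℝ b x)
    (ha0 : a x ≠ 0) (hb0 : b x ≠ 0) :
    deriv (fun t => log (a t / b t)) x = deriv a x / a x - deriv b x / b x := by
  rw [((ha.hasDerivAt.fun_div hb.hasDerivAt hb0).log (div_ne_zero ha0 hb0)).deriv]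
  field_simp

theorem OffDiagonalEq.exists_first_integral (ea : OffDiagonalEq a b c Λ)
    (eb : OffDiagonalEq b a c Λ) (ha : ContDiff ℝ 2 a) (hb : ContDiff ℝ 2 b)
    (hc : Differentiable ℝ c) (ha0 : ∀ η, a η ≠ 0) (hb0 : ∀ η, b η ≠ 0) (hc0 : ∀ η, c η ≠ 0) :
    ∃ C, ∀ η, deriv (fun t => log (a t / b t)) η * (a η * b η / c η) = C := by
  set W := fun t => deriv a t * b t - a t * deriv b t
  have hW : ∀ η, HasDerivAt W (deriv (deriv a) η * b η - a η * deriv (deriv b) η) η :=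
    fun η => hasDerivAt_wronskian (ha.differentiable two_ne_zero η)
      (hb.differentiable two_ne_zero η) (ha.differentiable_deriv_two η)
      (hb.differentiable_deriv_two η)
  have hconst := div_eq_div_of_deriv_mul_eq (fun η => (hW η).differentiableAt) hc hc0
    (fun η => by rw [(hW η).deriv]; exact ea.wronskian_deriv eb ha0 hb0 hc0 η)
  refine ⟨W 0 / c 0, fun η => ?_⟩
  rw [deriv_log_div (ha.differentiable two_ne_zero η) (hb.differentiable two_ne_zero η)
    (ha0 η) (hb0 η), ← hconst η 0]
  field_simp [ha0 η, hb0 η, hc0 η]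
  ring

end

theorem off_diagonal_first_integrals_general (α β γ Λ : ℝ → ℝ)
    (hα : ContDiff ℝ 2 α) (hβ : ContDiff ℝ 2 β) (hγ : ContDiff ℝ 2 γ)
    (hα0 : ∀ η, α η ≠ 0) (hβ0 : ∀ η, β η ≠ 0) (hγ0 : ∀ η, γ η ≠ 0)
    (e1 : ∀ η, deriv (deriv α) η / α η =
      -2 * (deriv Λ η) ^ 2 + (deriv α η / α η) * (deriv β η / β η + deriv γ η / γ η))
    (e2 : ∀ η, deriv (deriv β) η / β η =
      -2 * (deriv Λ η) ^ 2 + (deriv β η / β η) * (deriv α η / α η + deriv γ η / γ η))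
    (e3 : ∀ η, deriv (deriv γ) η / γ η =
      -2 * (deriv Λ η) ^ 2 + (deriv γ η / γ η) * (deriv α η / α η + deriv β η / β η)) :
    (∃ C₁, ∀ η, deriv (fun t => Real.log (α t / β t)) η * (α η * β η / γ η) = C₁) ∧
    (∃ C₂, ∀ η, deriv (fun t => Real.log (γ t / α t)) η * (α η * γ η / β η) = C₂) ∧
    (∃ C₃, ∀ η, deriv (fun t => Real.log (β t / γ t)) η * (β η * γ η / α η) = C₃) := by
  have eα : OffDiagonalEq α β γ Λ := e1
  have eβ : OffDiagonalEq β α γ Λ := e2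
  have eγ : OffDiagonalEq γ α β Λ := e3
  refine ⟨eα.exists_first_integral eβ hα hβ (hγ.differentiable two_ne_zero) hα0 hβ0 hγ0, ?_,
    eβ.swap.exists_first_integral eγ.swap hβ hγ (hα.differentiable two_ne_zero) hβ0 hγ0 hα0⟩
  obtain ⟨C, hC⟩ :=
    eγ.exists_first_integral eα.swap hγ hα (hβ.differentiable two_ne_zero) hγ0 hα0 hβ0
  exact ⟨C, fun η => by rw [mul_comm (α η)]; exact hC η⟩

/-- For C² never-vanishing α, β, γ satisfying the off-diagonal plane-wave
Einstein equations, each of (ln(α/β))'·(αβ/γ), (ln(γ/α))'·(αγ/β) and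
(ln(β/γ))'·(βγ/α) is constant. -/
theorem off_diagonal_first_integrals (α β γ Λ : ℝ → ℝ)
    (hα : ContDiff ℝ 2 α) (hβ : ContDiff ℝ 2 β) (hγ : ContDiff ℝ 2 γ)
    (hΛ : ContDiff ℝ 2 Λ)
    (hα0 : ∀ η, α η ≠ 0) (hβ0 : ∀ η, β η ≠ 0) (hγ0 : ∀ η, γ η ≠ 0)
    (e1 : ∀ η, deriv (deriv α) η / α η =
      -2 * (deriv Λ η) ^ 2 + (deriv α η / α η) * (deriv β η / β η + deriv γ η / γ η))
    (e2 : ∀ η, deriv (deriv β) η / β η =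
      -2 * (deriv Λ η) ^ 2 + (deriv β η / β η) * (deriv α η / α η + deriv γ η / γ η))
    (e3 : ∀ η, deriv (deriv γ) η / γ η =
      -2 * (deriv Λ η) ^ 2 + (deriv γ η / γ η) * (deriv α η / α η + deriv β η / β η)) :
    (∃ C₁, ∀ η, deriv (fun t => Real.log (α t / β t)) η * (α η * β η / γ η) = C₁) ∧
    (∃ C₂, ∀ η, deriv (fun t => Real.log (γ t / α t)) η * (α η * γ η / β η) = C₂) ∧
    (∃ C₃, ∀ η, deriv (fun t => Real.log (β t / γ t)) η * (β η * γ η / α η) = C₃) :=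
  off_diagonal_first_integrals_general α β γ Λ hα hβ hγ hα0 hβ0 hγ0 e1 e2 e3
end

section
/- Suppose α, β, γ, Λ : ℝ → ℝ satisfy the conservation law (αβ/γ · Λ')' = p²(αγ/β · Λ')' + q²(βγ/α · Λ')' on ℝ, with α, β, γ positive, and suppose Λ'(η₀) = 0 at some point η₀. Then the first integral αβ/γ·Λ' - p²·αγ/β·Λ' - q²·βγ/α·Λ' vanishes identically, i.e. wherever Λ' ≠ 0 one has α²β² = p²α²γ² + q²β²γ². -/
/-- If the plane-wave conservation law holds and Λ' vanishes at one point,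
then the first integral αβ/γ·Λ' − p²αγ/β·Λ' − q²βγ/α·Λ' vanishes identically,
so wherever Λ' ≠ 0 one has α²β² = p²α²γ² + q²β²γ². -/
theorem plane_wave_first_integral_vanishes (α β γ Λ : ℝ → ℝ) (p q : ℝ) (η₀ : ℝ)
    (hαpos : ∀ η, 0 < α η) (hβpos : ∀ η, 0 < β η) (hγpos : ∀ η, 0 < γ η)
    (hF : Differentiable ℝ (fun t => α t * β t / γ t * deriv Λ t
      - p ^ 2 * (α t * γ t / β t * deriv Λ t)
      - q ^ 2 * (β t * γ t / α t * deriv Λ t)))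
    (hcons : ∀ η, deriv (fun t => α t * β t / γ t * deriv Λ t
      - p ^ 2 * (α t * γ t / β t * deriv Λ t)
      - q ^ 2 * (β t * γ t / α t * deriv Λ t)) η = 0)
    (hΛ0 : deriv Λ η₀ = 0) :
    (∀ η, α η * β η / γ η * deriv Λ η
      - p ^ 2 * (α η * γ η / β η * deriv Λ η)
      - q ^ 2 * (β η * γ η / α η * deriv Λ η) = 0) ∧
    (∀ η, deriv Λ η ≠ 0 →
      (α η) ^ 2 * (β η) ^ 2
        = p ^ 2 * (α η) ^ 2 * (γ η) ^ 2 + q ^ 2 * (β η) ^ 2 * (γ η) ^ 2) := by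
  have hconst : ∀ η, α η * β η / γ η * deriv Λ η
      - p ^ 2 * (α η * γ η / β η * deriv Λ η)
      - q ^ 2 * (β η * γ η / α η * deriv Λ η) = 0 := by
    intro η
    have := is_const_of_deriv_eq_zero hF hcons η η₀
    rw [hΛ0] at this
    simpa using this
  refine ⟨hconst, fun η hη => ?_⟩
  have h := hconst η
  have hα := (hαpos η).ne'
  have hβ := (hβpos η).ne'
  have hγ := (hγpos η).ne'
  field_simp at h
  have key : ((α η)^2*(β η)^2 - (p^2*(α η)^2*(γ η)^2 + q^2*(β η)^2*(γ η)^2)) * deriv Λ η = 0 := by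
    linear_combination h
  have := mul_eq_zero.mp key
  rcases this with h2 | h2
  · linarith
  · exact absurd h2 hη
end

section
/- Let α₀ : ℝ → ℝ be continuous with α₀(η)² → 1 as |η| → ∞ and such that 1/α₀² − 1 is integrable on ℝ. Then the function Ψ(η) = K·|α₀(η)|^{-3/2}·exp(-(ik²/Ω)·η + (ik²/Ω)·∫_η^∞ (α₀(s)^{-2} − 1) ds) satisfies Ψ(η)·exp((ik²/Ω)η) → K as η → +∞ and Ψ(η)·exp((ik²/Ω)(η − Δ)) → K as η → −∞, where Δ = ∫_{-∞}^∞ (α₀(s)^{-2} − 1) ds. -/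
/-!
The amplitude |α₀|^(-3/2) tends to 1 at both ends, and after multiplication by the plane wave
the phase reduces to (ik²/Ω)(∫_η^∞ (α₀⁻² − 1) − L). The tail integral of an integrable function
tends to L = 0 as η → +∞ and to the full integral L = Δ as η → −∞.
-/

open Filter Topology MeasureTheory Set

section

variable {E : Type*} [NormedAddCommGroup E] [NormedSpace ℝ E]

theorem tendsto_setIntegral_Ioi_atTop {f : ℝ → E} (hf : Integrable f) :
    Tendsto (fun η ↦ ∫ s in Ioi η, f s) atTop (𝓝 0) := by
  have hempty : ⋂ η : ℝ, Ioi η = ∅ := iInter_eq_empty_iff.2 fun x ↦ ⟨x, lt_irrefl x⟩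
  simpa [hempty] using tendsto_setIntegral_of_antitone (fun _ ↦ measurableSet_Ioi)
    (fun _ _ h ↦ Ioi_subset_Ioi h) ⟨0, hf.integrableOn⟩

theorem tendsto_setIntegral_Ioi_atBot {f : ℝ → E} (hf : Integrable f) :
    Tendsto (fun η ↦ ∫ s in Ioi η, f s) atBot (𝓝 (∫ s, f s)) := by
  have huniv : ⋃ η : ℝᵒᵈ, Ioi (OrderDual.ofDual η) = univ :=
    iUnion_eq_univ_iff.2 fun x ↦ ⟨OrderDual.toDual (x - 1), sub_one_lt x⟩
  have := tendsto_setIntegral_of_monotone (μ := volume) (f := f)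
    (s := fun η : ℝᵒᵈ ↦ Ioi (OrderDual.ofDual η)) (fun _ ↦ measurableSet_Ioi)
    (fun _ _ h ↦ Ioi_subset_Ioi h) (by rw [huniv]; exact hf.integrableOn)
  rwa [huniv, setIntegral_univ] at this

end

theorem tendsto_abs_rpow_of_tendsto_sq {α : Type*} {l : Filter α} {a : α → ℝ}
    (h : Tendsto (fun x ↦ a x ^ 2) l (𝓝 1)) (p : ℝ) :
    Tendsto (fun x ↦ |a x| ^ p) l (𝓝 1) := by
  have habs : Tendsto (fun x ↦ |a x|) l (𝓝 1) := by
    simpa [Real.sqrt_sq_eq_abs] using h.sqrt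
  simpa using habs.rpow_const (Or.inl one_ne_zero)

theorem tendsto_mul_exp_phase_shift {l : Filter ℝ} (K c : ℂ) {A g : ℝ → ℝ} {L : ℝ}
    (hA : Tendsto A l (𝓝 1)) (hg : Tendsto g l (𝓝 L)) :
    Tendsto (fun η : ℝ ↦ K * (A η : ℂ) * Complex.exp (-c * η + c * (g η : ℂ))
      * Complex.exp (c * ((η - L : ℝ) : ℂ))) l (𝓝 K) := by
  have hphase : Tendsto (fun η ↦ Complex.exp (c * ((g η : ℂ) - L))) l (𝓝 1) := by
    have : Tendsto (fun η ↦ (g η : ℂ) - L) l (𝓝 0) := by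
      simpa using hg.ofReal.sub_const (L : ℂ)
    simpa using (this.const_mul c).cexp
  convert (hA.ofReal.const_mul K).mul hphase using 2 with η
  · rw [mul_assoc, ← Complex.exp_add]
    push_cast
    ring_nf
  · simp

theorem bpr_transparency_general (α₀ : ℝ → ℝ) (K : ℂ) (Ω k : ℝ)
    (htop : Tendsto (fun η => (α₀ η) ^ 2) atTop (𝓝 1))
    (hbot : Tendsto (fun η => (α₀ η) ^ 2) atBot (𝓝 1))
    (hint : Integrable (fun s => (α₀ s) ^ (-2 : ℤ) - 1)) :
    (Tendsto (fun η : ℝ =>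
        (K * ((|α₀ η| ^ (-(3 / 2 : ℝ)) : ℝ) : ℂ)
          * Complex.exp (-(Complex.I * (k : ℂ) ^ 2 / (Ω : ℂ)) * (η : ℂ)
              + Complex.I * (k : ℂ) ^ 2 / (Ω : ℂ)
                * ((∫ s in Set.Ioi η, ((α₀ s) ^ (-2 : ℤ) - 1) : ℝ) : ℂ)))
        * Complex.exp (Complex.I * (k : ℂ) ^ 2 / (Ω : ℂ) * (η : ℂ)))
      atTop (𝓝 K)) ∧
    (Tendsto (fun η : ℝ =>
        (K * ((|α₀ η| ^ (-(3 / 2 : ℝ)) : ℝ) : ℂ)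
          * Complex.exp (-(Complex.I * (k : ℂ) ^ 2 / (Ω : ℂ)) * (η : ℂ)
              + Complex.I * (k : ℂ) ^ 2 / (Ω : ℂ)
                * ((∫ s in Set.Ioi η, ((α₀ s) ^ (-2 : ℤ) - 1) : ℝ) : ℂ)))
        * Complex.exp (Complex.I * (k : ℂ) ^ 2 / (Ω : ℂ)
            * ((η - ∫ s, ((α₀ s) ^ (-2 : ℤ) - 1) : ℝ) : ℂ)))
      atBot (𝓝 K)) := by
  have hright := tendsto_mul_exp_phase_shift K (Complex.I * (k : ℂ) ^ 2 / (Ω : ℂ))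
    (tendsto_abs_rpow_of_tendsto_sq htop (-(3 / 2))) (tendsto_setIntegral_Ioi_atTop hint)
  have hleft := tendsto_mul_exp_phase_shift K (Complex.I * (k : ℂ) ^ 2 / (Ω : ℂ))
    (tendsto_abs_rpow_of_tendsto_sq hbot (-(3 / 2))) (tendsto_setIntegral_Ioi_atBot hint)
  exact ⟨by simpa using hright, hleft⟩

/-- Transparency of a BPR barrier: the wave Ψ has pure plane-wave asymptotics
at ±∞ with the only remnant of the collision being the phase shift
Δ = ∫ (α₀⁻² − 1). -/
theorem bpr_transparency (α₀ : ℝ → ℝ) (K : ℂ) (Ω k : ℝ) (hΩ : Ω ≠ 0)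
    (hcont : Continuous α₀)
    (htop : Tendsto (fun η => (α₀ η) ^ 2) atTop (𝓝 1))
    (hbot : Tendsto (fun η => (α₀ η) ^ 2) atBot (𝓝 1))
    (hint : Integrable (fun s => (α₀ s) ^ (-2 : ℤ) - 1)) :
    (Tendsto (fun η : ℝ =>
        (K * ((|α₀ η| ^ (-(3 / 2 : ℝ)) : ℝ) : ℂ)
          * Complex.exp (-(Complex.I * (k : ℂ) ^ 2 / (Ω : ℂ)) * (η : ℂ)
              + Complex.I * (k : ℂ) ^ 2 / (Ω : ℂ)
                * ((∫ s in Set.Ioi η, ((α₀ s) ^ (-2 : ℤ) - 1) : ℝ) : ℂ)))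
        * Complex.exp (Complex.I * (k : ℂ) ^ 2 / (Ω : ℂ) * (η : ℂ)))
      atTop (𝓝 K)) ∧
    (Tendsto (fun η : ℝ =>
        (K * ((|α₀ η| ^ (-(3 / 2 : ℝ)) : ℝ) : ℂ)
          * Complex.exp (-(Complex.I * (k : ℂ) ^ 2 / (Ω : ℂ)) * (η : ℂ)
              + Complex.I * (k : ℂ) ^ 2 / (Ω : ℂ)
                * ((∫ s in Set.Ioi η, ((α₀ s) ^ (-2 : ℤ) - 1) : ℝ) : ℂ)))
        * Complex.exp (Complex.I * (k : ℂ) ^ 2 / (Ω : ℂ)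
            * ((η - ∫ s, ((α₀ s) ^ (-2 : ℤ) - 1) : ℝ) : ℂ)))
      atBot (𝓝 K)) :=
  bpr_transparency_general α₀ K Ω k htop hbot hint
end
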